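/- arXiv:1506.00466 — 3 statements merged into one kernel-verified Lean document; each statement's English description precedes it below -/
import Mathlib

section
/- There exists a constant C > 0 such that for every integer N ≥ 3, writing r = ln N and J(z) = ∫₂^N e^{2πizx} / ln x dx for real z, one has: |J(z)| ≤ C · N / r whenever |z| ≤ 1/N, and |J(z)| ≤ C / (|z| · r) whenever 1/N < |z| ≤ N^(−1/2). -/
open Real intervalIntegral

/-- `vinogradovJ N z = ∫₂^N e^{2πizx} / ln x dx`. -/
noncomputable def vinogradovJ (N : ℕ) (z : ℝ) : ℂ :=
  ∫ x in (2 : ℝ)..(N : ℝ), Complex.exp ((2 * Real.pi * z * x : ℝ) * Complex.I) / (Real.log x : ℂ)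

open MeasureTheory (volume)
open Complex (I)
open Set

/-! For `|z| ≤ 1/N` the trivial bound `‖J(z)‖ ≤ ∫₂^N dx / log x ≤ 6N / log N` suffices.
Otherwise split `[2, N]` at `s = max 2 √N`. On `[2, s]` the trivial bound gives
`≪ √N / log N ≤ 1 / (|z| log N)` because `|z| ≤ N^(-1/2)`; on `[s, N]` integration by parts
against the decreasing amplitude `1 / log x` gives `≪ 1 / (|z| log s) ≪ 1 / (|z| log N)`. -/

theorem hasDerivAt_exp_ofReal_mul_I_div (c x : ℝ) (hc : c ≠ 0) :
    HasDerivAt (fun t : ℝ ↦ Complex.exp ((c * t : ℝ) * I) / (c * I))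
      (Complex.exp ((c * x : ℝ) * I)) x := by
  have h := ((((hasDerivAt_id x).const_mul c).ofReal_comp).mul_const I).cexp.div_const (c * I)
  have hcI : (c * I : ℂ) ≠ 0 := mul_ne_zero (Complex.ofReal_ne_zero.mpr hc) Complex.I_ne_zero
  simpa only [id, mul_one, mul_div_assoc, div_self hcI] using h

theorem norm_exp_ofReal_mul_I_div (c x : ℝ) :
    ‖Complex.exp ((c * x : ℝ) * I) / (c * I)‖ = |c|⁻¹ := by
  rw [norm_div, Complex.norm_exp_ofReal_mul_I, norm_mul, Complex.norm_I, Complex.norm_real,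
    Real.norm_eq_abs, mul_one, one_div]

theorem norm_integral_smul_deriv_le_of_deriv_nonpos {E : Type*} [NormedAddCommGroup E]
    [NormedSpace ℝ E] [CompleteSpace E] {u u' : ℝ → ℝ} {v v' : ℝ → E} {a b M : ℝ}
    (hab : a ≤ b) (hu : ∀ x ∈ Icc a b, HasDerivAt u (u' x) x) (hu' : ∀ x ∈ Icc a b, u' x ≤ 0)
    (hub : 0 ≤ u b) (hv : ∀ x ∈ Icc a b, HasDerivAt v (v' x) x)
    (hv' : IntervalIntegrable v' volume a b) (hvM : ∀ x ∈ Icc a b, ‖v x‖ ≤ M) :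
    ‖∫ x in a..b, u x • v' x‖ ≤ 2 * u a * M := by
  rw [← uIcc_of_le hab] at hu hu' hv hvM
  have hu'_int : IntervalIntegrable u' volume a b := by
    have := intervalIntegrable_deriv_of_nonneg (g := -u) (g' := -u')
      (HasDerivAt.continuousOn fun x hx ↦ (hu x hx).neg)
      (fun x hx ↦ (hu x (Ioo_subset_Icc_self hx)).neg)
      (fun x hx ↦ neg_nonneg.mpr (hu' x (Ioo_subset_Icc_self hx)))
    simpa using this.neg
  have hdrop : ∫ x in a..b, -u' x = u a - u b := by
    rw [integral_neg, integral_eq_sub_of_hasDerivAt hu hu'_int]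
    ring
  have hua : u b ≤ u a := by
    have := integral_nonneg (μ := volume) hab fun x hx ↦ neg_nonneg.mpr (hu' x (by simpa [hab]))
    linarith
  have hrem : ‖∫ x in a..b, u' x • v x‖ ≤ (u a - u b) * M := by
    rw [← hdrop, ← integral_mul_const]
    refine norm_integral_le_of_norm_le hab (Filter.Eventually.of_forall fun x hx ↦ ?_)
      (hu'_int.neg.mul_const M)
    have hx' : x ∈ uIcc a b := uIcc_of_le hab ▸ Ioc_subset_Icc_self hx
    rw [norm_smul, Real.norm_of_nonpos (hu' x hx')]
    exact mul_le_mul_of_nonneg_left (hvM x hx') (neg_nonneg.mpr (hu' x hx'))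
  have hend : ∀ x ∈ uIcc a b, 0 ≤ u x → ‖u x • v x‖ ≤ u x * M := fun x hx hux ↦ by
    rw [norm_smul, Real.norm_of_nonneg hux]
    exact mul_le_mul_of_nonneg_left (hvM x hx) hux
  rw [integral_smul_deriv_eq_deriv_smul hu hv hu'_int hv']
  calc ‖u b • v b - u a • v a - ∫ x in a..b, u' x • v x‖
      ≤ ‖u b • v b‖ + ‖u a • v a‖ + ‖∫ x in a..b, u' x • v x‖ :=
        (norm_sub_le _ _).trans (add_le_add_left (norm_sub_le _ _) _)
    _ ≤ u b * M + u a * M + (u a - u b) * M := by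
        gcongr
        · exact hend b right_mem_uIcc hub
        · exact hend a left_mem_uIcc (hub.trans hua)
    _ = 2 * u a * M := by ring

theorem norm_integral_smul_exp_le_of_deriv_nonpos {u u' : ℝ → ℝ} {a b c : ℝ} (hc : c ≠ 0)
    (hab : a ≤ b) (hu : ∀ x ∈ Icc a b, HasDerivAt u (u' x) x) (hu' : ∀ x ∈ Icc a b, u' x ≤ 0)
    (hub : 0 ≤ u b) :
    ‖∫ x in a..b, u x • Complex.exp ((c * x : ℝ) * I)‖ ≤ 2 * u a / |c| := by
  rw [div_eq_mul_inv]
  exact norm_integral_smul_deriv_le_of_deriv_nonpos hab hu hu' hub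
    (fun x _ ↦ hasDerivAt_exp_ofReal_mul_I_div c x hc)
    ((by fun_prop : Continuous fun x : ℝ ↦ Complex.exp ((c * x : ℝ) * I)).intervalIntegrable _ _)
    (fun x _ ↦ (norm_exp_ofReal_mul_I_div c x).le)

theorem hasDerivAt_inv_log {x : ℝ} (hx : 1 < x) :
    HasDerivAt (fun t ↦ (log t)⁻¹) (-(x * log x ^ 2)⁻¹) x := by
  have h := (hasDerivAt_log (by linarith : x ≠ 0)).inv (log_pos hx).ne'
  rwa [neg_div, div_eq_mul_inv, ← mul_inv] at h

theorem continuousOn_inv_log : ContinuousOn (fun x ↦ (log x)⁻¹) (Ioi 1) :=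
  fun _ hx ↦ (hasDerivAt_inv_log hx).continuousAt.continuousWithinAt

theorem intervalIntegrable_inv_log {a b : ℝ} (ha : 1 < a) (hb : 1 < b) :
    IntervalIntegrable (fun x ↦ (log x)⁻¹) volume a b :=
  (continuousOn_inv_log.mono fun _ hx ↦ lt_of_lt_of_le (lt_min ha hb) hx.1).intervalIntegrable

theorem integral_inv_log_le {a b : ℝ} (ha : 1 < a) (hab : a ≤ b) :
    ∫ x in a..b, (log x)⁻¹ ≤ (b - a) / log a := by
  have h := integral_mono_on hab (intervalIntegrable_inv_log ha (ha.trans_le hab))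
    intervalIntegrable_const fun x hx ↦
      inv_anti₀ (log_pos ha) (log_le_log (by linarith) hx.1)
  simpa [div_eq_mul_inv] using h

noncomputable def vinogradovIntegrand (z x : ℝ) : ℂ :=
  Complex.exp ((2 * π * z * x : ℝ) * I) / (log x : ℂ)

theorem vinogradovIntegrand_eq_smul (z x : ℝ) :
    vinogradovIntegrand z x = (log x)⁻¹ • Complex.exp (((2 * π * z) * x : ℝ) * I) := by
  rw [vinogradovIntegrand, Complex.real_smul, Complex.ofReal_inv, div_eq_inv_mul]

theorem norm_vinogradovIntegrand {z x : ℝ} (hx : 1 < x) :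
    ‖vinogradovIntegrand z x‖ = (log x)⁻¹ := by
  rw [vinogradovIntegrand_eq_smul, norm_smul, Complex.norm_exp_ofReal_mul_I, mul_one,
    Real.norm_of_nonneg (inv_nonneg.mpr (log_pos hx).le)]

theorem intervalIntegrable_vinogradovIntegrand (z : ℝ) {a b : ℝ} (ha : 1 < a) (hb : 1 < b) :
    IntervalIntegrable (vinogradovIntegrand z) volume a b := by
  simp_rw [funext (vinogradovIntegrand_eq_smul z)]
  exact (intervalIntegrable_inv_log ha hb).smul_continuousOn (by fun_prop)

theorem norm_integral_vinogradovIntegrand_le_integral_inv_log (z : ℝ) {a b : ℝ} (ha : 1 < a)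
    (hab : a ≤ b) : ‖∫ x in a..b, vinogradovIntegrand z x‖ ≤ ∫ x in a..b, (log x)⁻¹ :=
  norm_integral_le_of_norm_le hab
    (Filter.Eventually.of_forall fun _ hx ↦ (norm_vinogradovIntegrand (ha.trans hx.1)).le)
    (intervalIntegrable_inv_log ha (ha.trans_le hab))

theorem norm_integral_vinogradovIntegrand_le_of_ne_zero {z a b : ℝ} (hz : z ≠ 0) (ha : 1 < a)
    (hab : a ≤ b) : ‖∫ x in a..b, vinogradovIntegrand z x‖ ≤ 1 / (π * |z| * log a) := by
  have hu' : ∀ x ∈ Icc a b, -(x * log x ^ 2)⁻¹ ≤ 0 := fun x hx ↦ by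
    have := log_pos (ha.trans_le hx.1)
    have : 0 < x := by linarith [hx.1]
    exact neg_nonpos.mpr (by positivity)
  have h := norm_integral_smul_exp_le_of_deriv_nonpos (c := 2 * π * z) (by positivity) hab
    (fun x hx ↦ hasDerivAt_inv_log (ha.trans_le hx.1)) hu'
    (inv_nonneg.mpr (log_pos (ha.trans_le hab)).le)
  simp_rw [vinogradovIntegrand_eq_smul]
  convert h using 1
  rw [abs_mul, abs_of_pos (by positivity : 0 < 2 * π)]
  field_simp

theorem log_le_two_mul_sqrt {x : ℝ} (hx : 0 < x) : log x ≤ 2 * √x := by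
  have h := log_le_sub_one_of_pos (sqrt_pos.mpr hx)
  rw [log_sqrt hx.le] at h
  linarith

noncomputable def sqrtSplit (M : ℝ) : ℝ := max 2 √M

theorem two_le_sqrtSplit (M : ℝ) : 2 ≤ sqrtSplit M := le_max_left _ _

theorem sqrtSplit_le {M : ℝ} (hM : 2 ≤ M) : sqrtSplit M ≤ M :=
  max_le hM (sqrt_le_self_iff.mpr (Or.inr (by linarith)))

theorem sqrtSplit_sub_two_le_sqrt (M : ℝ) : sqrtSplit M - 2 ≤ √M := by
  rw [sqrtSplit, sub_le_iff_le_add]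
  exact max_le (by linarith [sqrt_nonneg M]) (by linarith)

theorem sqrtSplit_le_two_mul_sqrt {M : ℝ} (hM : 1 ≤ M) : sqrtSplit M ≤ 2 * √M := by
  have := one_le_sqrt.mpr hM
  exact max_le (by linarith) (by linarith)

theorem log_div_two_le_log_sqrtSplit {M : ℝ} (hM : 0 < M) : log M / 2 ≤ log (sqrtSplit M) := by
  rw [← log_sqrt hM.le]
  exact log_le_log (sqrt_pos.mpr hM) (le_max_right _ _)

theorem integral_inv_log_le_six_mul_div_log {M : ℝ} (hM : 2 ≤ M) :
    ∫ x in (2 : ℝ)..M, (log x)⁻¹ ≤ 6 * M / log M := by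
  set s := sqrtSplit M
  have hs := two_le_sqrtSplit M
  have hL : 0 < log M := log_pos (by linarith)
  have hLs := log_div_two_le_log_sqrtSplit (by linarith : 0 < M)
  have hlog2 : 1 / 2 < log 2 := by linarith [log_two_gt_d9]
  rw [← integral_add_adjacent_intervals (b := s)
    (intervalIntegrable_inv_log one_lt_two (by linarith))
    (intervalIntegrable_inv_log (by linarith) (by linarith))]
  have hlow : ∫ x in (2 : ℝ)..s, (log x)⁻¹ ≤ 4 * M / log M :=
    calc ∫ x in (2 : ℝ)..s, (log x)⁻¹ ≤ (s - 2) / log 2 := integral_inv_log_le one_lt_two hs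
      _ ≤ √M / (1 / 2) := by gcongr; exact sqrtSplit_sub_two_le_sqrt M
      _ ≤ 4 * M / log M := by
        rw [le_div_iff₀ hL]
        nlinarith [log_le_two_mul_sqrt (by linarith : 0 < M), mul_self_sqrt (by linarith : 0 ≤ M),
          sqrt_nonneg M]
  have hhigh : ∫ x in s..M, (log x)⁻¹ ≤ 2 * M / log M :=
    calc ∫ x in s..M, (log x)⁻¹ ≤ (M - s) / log s :=
          integral_inv_log_le (by linarith) (sqrtSplit_le hM)
      _ ≤ M / (log M / 2) := by gcongr; linarith
      _ = 2 * M / log M := by field_simp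
  calc _ ≤ 4 * M / log M + 2 * M / log M := add_le_add hlow hhigh
    _ = 6 * M / log M := by ring

theorem norm_integral_vinogradovIntegrand_le_mul_div_log (z : ℝ) {M : ℝ} (hM : 2 ≤ M) :
    ‖∫ x in (2 : ℝ)..M, vinogradovIntegrand z x‖ ≤ 6 * M / log M :=
  (norm_integral_vinogradovIntegrand_le_integral_inv_log z one_lt_two hM).trans
    (integral_inv_log_le_six_mul_div_log hM)

theorem norm_integral_vinogradovIntegrand_le_div_abs_mul_log {z M : ℝ} (hz : z ≠ 0)
    (hM : 2 ≤ M) (hzM : |z| * √M ≤ 1) :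
    ‖∫ x in (2 : ℝ)..M, vinogradovIntegrand z x‖ ≤ 25 / (|z| * log M) := by
  set s := sqrtSplit M
  have hs := two_le_sqrtSplit M
  have hL : 0 < log M := log_pos (by linarith)
  have hLs := log_div_two_le_log_sqrtSplit (by linarith : 0 < M)
  have hz' : 0 < |z| := abs_pos.mpr hz
  have hsqrt : √M ≤ 1 / |z| := by rw [le_div_iff₀ hz']; linarith
  rw [← integral_add_adjacent_intervals (b := s)
    (intervalIntegrable_vinogradovIntegrand z one_lt_two (by linarith))
    (intervalIntegrable_vinogradovIntegrand z (by linarith) (by linarith))]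
  have hlow : ‖∫ x in (2 : ℝ)..s, vinogradovIntegrand z x‖ ≤ 24 / (|z| * log M) :=
    calc _ ≤ 6 * s / log s := norm_integral_vinogradovIntegrand_le_mul_div_log z hs
      _ ≤ 6 * (2 * √M) / (log M / 2) := by
        gcongr; exact sqrtSplit_le_two_mul_sqrt (by linarith)
      _ ≤ 6 * (2 * (1 / |z|)) / (log M / 2) := by gcongr
      _ = 24 / (|z| * log M) := by field_simp; ring
  have hhigh : ‖∫ x in s..M, vinogradovIntegrand z x‖ ≤ 1 / (|z| * log M) :=
    calc _ ≤ 1 / (π * |z| * log s) :=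
          norm_integral_vinogradovIntegrand_le_of_ne_zero hz (by linarith) (sqrtSplit_le hM)
      _ ≤ 1 / (2 * |z| * (log M / 2)) := by gcongr; linarith [pi_gt_three]
      _ = 1 / (|z| * log M) := by field_simp
  calc _ ≤ _ := norm_add_le _ _
    _ ≤ 24 / (|z| * log M) + 1 / (|z| * log M) := add_le_add hlow hhigh
    _ = 25 / (|z| * log M) := by ring

/-- There is a constant `C > 0` such that for every integer `N ≥ 3`, with `r = ln N`:
`|J(z)| ≤ C·N/r` whenever `|z| ≤ 1/N`, and `|J(z)| ≤ C/(|z|·r)` whenever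
`1/N < |z| ≤ N^(−1/2)`. -/
theorem vinogradovJ_bound :
    ∃ C : ℝ, 0 < C ∧ ∀ N : ℕ, 3 ≤ N → ∀ z : ℝ,
      (|z| ≤ 1 / N → ‖vinogradovJ N z‖ ≤ C * N / Real.log N) ∧
      (1 / N < |z| → |z| ≤ (N : ℝ) ^ (-(1 : ℝ) / 2) →
        ‖vinogradovJ N z‖ ≤ C / (|z| * Real.log N)) := by
  refine ⟨25, by norm_num, fun N hN z ↦ ⟨fun _ ↦ ?_, fun hz1 hz2 ↦ ?_⟩⟩
  all_goals have hN3 : (3 : ℝ) ≤ N := by exact_mod_cast hN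
  · calc ‖vinogradovJ N z‖ ≤ 6 * N / log N :=
          norm_integral_vinogradovIntegrand_le_mul_div_log z (by linarith)
      _ ≤ 25 * N / log N := by have := log_pos (by linarith : (1 : ℝ) < N); gcongr; norm_num
  · have hz : z ≠ 0 := by
      rintro rfl
      rw [abs_zero] at hz1
      linarith [(by positivity : (0 : ℝ) ≤ 1 / N)]
    rw [neg_div, rpow_neg (by positivity), ← sqrt_eq_rpow] at hz2
    refine norm_integral_vinogradovIntegrand_le_div_abs_mul_log hz (by linarith) ?_
    calc |z| * √N ≤ (√N)⁻¹ * √N := by gcongr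
      _ = 1 := inv_mul_cancel₀ (by positivity)
end

section
/- There exists a constant C > 0 such that for every integer N ≥ 3, ∫₂^N (1/ln x − 1/ln N) dx ≤ C · N / (ln N)². -/
open Real intervalIntegral

lemma log_le_two_sqrt' {u : ℝ} (hu : 1 ≤ u) : Real.log u ≤ 2 * Real.sqrt u := by
  have h0 : (0:ℝ) < u := by linarith
  have hs : 0 < Real.sqrt u := Real.sqrt_pos.mpr h0
  have h1 := Real.log_le_sub_one_of_pos hs
  rw [Real.log_sqrt h0.le] at h1
  linarith

lemma sq_log_le_sixteen_sqrt {u : ℝ} (hu : 1 ≤ u) :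
    (Real.log u) ^ 2 ≤ 16 * Real.sqrt u := by
  have h0 : (0:ℝ) < u := by linarith
  have h1 : (1:ℝ) ≤ Real.sqrt u := Real.one_le_sqrt.mpr hu
  have h2 := log_le_two_sqrt' h1
  rw [Real.log_sqrt h0.le] at h2
  have h3 : 0 ≤ Real.log u := Real.log_nonneg hu
  have h4 : Real.sqrt (Real.sqrt u) ^ 2 = Real.sqrt u := Real.sq_sqrt (Real.sqrt_nonneg u)
  nlinarith [Real.sqrt_nonneg (Real.sqrt u)]

lemma key_pointwise {n x : ℝ} (hn : 3 ≤ n) (hx2 : 2 ≤ x) (hxn : x ≤ n) :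
    1 / Real.log x - 1 / Real.log n ≤
      50 * (Real.sqrt n / Real.sqrt x) / (Real.log n) ^ 2 := by
  have hx0 : (0:ℝ) < x := by linarith
  have hn0 : (0:ℝ) < n := by linarith
  have hl0 : 0 < Real.log x := Real.log_pos (by linarith)
  have hlog2 : Real.log 2 ≤ Real.log x := Real.log_le_log (by norm_num) hx2
  have hL0 : 0 < Real.log n := Real.log_pos (by linarith)
  have hlL : Real.log x ≤ Real.log n := Real.log_le_log hx0 hxn
  set l := Real.log x
  set L := Real.log n
  have hu1 : (1:ℝ) ≤ n / x := (one_le_div hx0).mpr hxn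
  have hsu : Real.sqrt (n / x) = Real.sqrt n / Real.sqrt x := Real.sqrt_div hn0.le x
  have hlu : Real.log (n / x) = L - l := Real.log_div (ne_of_gt hn0) (ne_of_gt hx0)
  have hsu0 : 0 ≤ Real.sqrt (n / x) := Real.sqrt_nonneg _
  -- key: (L - l) * L ≤ 50 * sqrt(n/x) * l
  have key : (L - l) * L ≤ 50 * Real.sqrt (n / x) * l := by
    rcases le_or_gt L (2 * l) with h | h
    · have h2 : Real.log (n / x) ≤ 2 * Real.sqrt (n / x) := log_le_two_sqrt' hu1
      rw [hlu] at h2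
      nlinarith [mul_nonneg hsu0 hl0.le, mul_nonneg hsu0 hL0.le,
        mul_le_mul_of_nonneg_right h2 hL0.le]
    · have h2 : (Real.log (n / x)) ^ 2 ≤ 16 * Real.sqrt (n / x) :=
        sq_log_le_sixteen_sqrt hu1
      rw [hlu] at h2
      have hln2 : (0.69 : ℝ) ≤ Real.log 2 := by
        rw [show (0.69:ℝ) = 69/100 by norm_num]
        exact le_trans (by norm_num) Real.log_two_gt_d9.le
      have hLle : L ≤ 2 * (L - l) := by linarith
      have e1 : (L - l) * L ≤ (L - l) * (2 * (L - l)) :=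
        mul_le_mul_of_nonneg_left hLle (by linarith)
      have e2 : (L - l) * (2 * (L - l)) ≤ 32 * Real.sqrt (n / x) := by nlinarith
      nlinarith [mul_nonneg hsu0 (by linarith : (0:ℝ) ≤ l - 0.69)]
  have h1 : 1 / l - 1 / L = (L - l) / (l * L) := by
    field_simp
  rw [h1, div_le_div_iff₀ (by positivity) (by positivity)]
  calc (L - l) * L ^ 2 = ((L - l) * L) * L := by ring
    _ ≤ (50 * Real.sqrt (n / x) * l) * L := by
        exact mul_le_mul_of_nonneg_right key hL0.le
    _ = 50 * (Real.sqrt n / Real.sqrt x) * (l * L) := by rw [hsu]; ring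

/-- There is a constant `C > 0` such that for every integer `N ≥ 3`,
`∫₂^N (1/ln x − 1/ln N) dx ≤ C·N/(ln N)²`. -/
theorem integral_one_div_log_sub_bound :
    ∃ C : ℝ, 0 < C ∧ ∀ N : ℕ, 3 ≤ N →
      (∫ x in (2 : ℝ)..(N : ℝ), (1 / Real.log x - 1 / Real.log N)) ≤
        C * N / Real.log N ^ 2 := by
  refine ⟨100, by norm_num, fun N hN => ?_⟩
  set n : ℝ := (N : ℝ) with hn_def
  have hn : 3 ≤ n := by rw [hn_def]; exact_mod_cast hN
  have hn0 : (0:ℝ) < n := by linarith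
  have h2n : (2:ℝ) ≤ n := by linarith
  have hL0 : 0 < Real.log n := Real.log_pos (by linarith)
  set c : ℝ := 50 * Real.sqrt n / (Real.log n) ^ 2 with hc
  have hc0 : 0 ≤ c := by positivity
  -- integrability of f
  have hf : IntervalIntegrable (fun x => 1 / Real.log x - 1 / Real.log n)
      MeasureTheory.volume 2 n := by
    apply ContinuousOn.intervalIntegrable
    apply ContinuousOn.sub _ continuousOn_const
    apply ContinuousOn.div continuousOn_const
    · exact Real.continuousOn_log.mono (fun x hx => by
        simp only [Set.mem_uIcc, Set.mem_compl_iff, Set.mem_singleton_iff] at *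
        rcases hx with ⟨h1, h2⟩ | ⟨h1, h2⟩ <;> intro h <;> simp_all <;> linarith)
    · intro x hx
      rw [Set.uIcc_of_le h2n] at hx
      exact ne_of_gt (Real.log_pos (by linarith [hx.1]))
  -- integrability of g
  have hg : IntervalIntegrable (fun x => c * x ^ (-(1:ℝ)/2))
      MeasureTheory.volume 2 n := by
    apply ContinuousOn.intervalIntegrable
    apply ContinuousOn.mul continuousOn_const
    intro x hx
    rw [Set.uIcc_of_le h2n] at hx
    exact (Real.continuousAt_rpow_const x _ (Or.inl (by linarith [hx.1]))).continuousWithinAt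
  have hmono : (∫ x in (2:ℝ)..n, (1 / Real.log x - 1 / Real.log n)) ≤
      ∫ x in (2:ℝ)..n, c * x ^ (-(1:ℝ)/2) := by
    apply intervalIntegral.integral_mono_on h2n hf hg
    intro x hx
    have hx2 : 2 ≤ x := hx.1
    have hxn : x ≤ n := hx.2
    have hx0 : (0:ℝ) < x := by linarith
    have : c * x ^ (-(1:ℝ)/2) = 50 * (Real.sqrt n / Real.sqrt x) / (Real.log n) ^ 2 := by
      rw [hc]
      rw [show (-(1:ℝ)/2) = -(1/2 : ℝ) by norm_num, Real.rpow_neg hx0.le,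
        ← Real.sqrt_eq_rpow]
      field_simp
    rw [this]
    exact key_pointwise hn hx2 hxn
  have hint : (∫ x in (2:ℝ)..n, c * x ^ (-(1:ℝ)/2)) ≤ 100 * n / Real.log n ^ 2 := by
    rw [intervalIntegral.integral_const_mul,
      integral_rpow (Or.inl (by norm_num))]
    have he : (-(1:ℝ)/2 + 1) = (1/2 : ℝ) := by norm_num
    rw [he]
    have h1 : n ^ ((1:ℝ)/2) = Real.sqrt n := (Real.sqrt_eq_rpow n).symm
    have h2 : (2:ℝ) ^ ((1:ℝ)/2) = Real.sqrt 2 := (Real.sqrt_eq_rpow 2).symm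
    rw [h1, h2]
    have hs2 : 0 ≤ Real.sqrt 2 := Real.sqrt_nonneg 2
    have hsn : 0 ≤ Real.sqrt n := Real.sqrt_nonneg n
    have hsq : Real.sqrt n * Real.sqrt n = n := Real.mul_self_sqrt hn0.le
    rw [hc]
    have heq : 50 * Real.sqrt n / Real.log n ^ 2 * ((Real.sqrt n - Real.sqrt 2) / (1 / 2))
        = 100 * (Real.sqrt n * (Real.sqrt n - Real.sqrt 2)) / Real.log n ^ 2 := by
      ring
    rw [heq]
    gcongr
    nlinarith
  calc (∫ x in (2:ℝ)..n, (1 / Real.log x - 1 / Real.log n)) ≤ _ := hmono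
    _ ≤ 100 * n / Real.log n ^ 2 := hint
end

section
/- The infinite product over all primes ∏_{p prime} (1 − 2/(p² + 1)) converges and equals 2/5. -/
/-!
Writing `1 - 2 / (p ^ 2 + 1) = (1 - p⁻²)² / (1 - p⁻⁴)`, the product splits into Euler products:
it equals `ζ(4) / ζ(2)² = (π⁴ / 90) / (π² / 6)² = 2 / 5`.
-/

open Real

theorem hasProd_primes_inv_one_sub_one_div_pow {k : ℕ} (hk : 2 ≤ k) :
    HasProd (fun p : Nat.Primes => (1 - 1 / (p : ℝ) ^ k)⁻¹) (∑' n : ℕ, 1 / (n : ℝ) ^ k) := by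
  let f : ℕ →*₀ ℝ := (powMonoidWithZeroHom (by omega : k ≠ 0)).comp
    (invMonoidWithZeroHom.comp (Nat.castRingHom ℝ).toMonoidWithZeroHom)
  have hf (n : ℕ) : f n = 1 / (n : ℝ) ^ k := by rw [one_div, ← inv_pow]; rfl
  have hsum : Summable (‖f ·‖) := by
    simpa [hf] using Real.summable_one_div_nat_pow.mpr hk
  simpa only [hf] using EulerProduct.eulerProduct_completely_multiplicative_hasProd hsum

theorem hasProd_primes_one_sub_one_div_sq :
    HasProd (fun p : Nat.Primes => 1 - 1 / (p : ℝ) ^ 2) (6 / π ^ 2) := by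
  have h := (hasProd_primes_inv_one_sub_one_div_pow le_rfl).inv₀
    (hasSum_zeta_two.tsum_eq ▸ by positivity)
  rw [hasSum_zeta_two.tsum_eq, inv_div] at h
  simpa only [inv_inv] using h

theorem hasProd_primes_inv_one_sub_one_div_pow_four :
    HasProd (fun p : Nat.Primes => (1 - 1 / (p : ℝ) ^ 4)⁻¹) (π ^ 4 / 90) :=
  hasSum_zeta_four.tsum_eq ▸ hasProd_primes_inv_one_sub_one_div_pow (by norm_num)

theorem one_sub_two_div_sq_add_one {x : ℝ} (hx : x ≠ 0) :
    1 - 2 / (x ^ 2 + 1) = (1 - 1 / x ^ 2) ^ 2 * (1 - 1 / x ^ 4)⁻¹ := by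
  have hfac : 1 - 1 / x ^ 4 = (1 - 1 / x ^ 2) * (1 + 1 / x ^ 2) := by ring
  -- `a * a * a⁻¹ = a` holds also at `a = 0`, so no case split on `x ^ 2 = 1` is needed.
  rw [hfac, mul_inv, ← mul_assoc, pow_two (1 - 1 / x ^ 2), mul_self_mul_inv]
  field_simp
  ring

/-- The infinite product over all primes `∏_p (1 − 2/(p² + 1))` converges and
equals `2/5`. -/
theorem prod_primes_one_sub_two_div :
    Multipliable (fun p : Nat.Primes => 1 - 2 / ((p : ℝ) ^ 2 + 1)) ∧
    (∏' p : Nat.Primes, (1 - 2 / ((p : ℝ) ^ 2 + 1))) = 2 / 5 := by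
  have h :=
    (hasProd_primes_one_sub_one_div_sq.pow 2).mul hasProd_primes_inv_one_sub_one_div_pow_four
  have hval : (6 / π ^ 2) ^ 2 * (π ^ 4 / 90) = 2 / 5 := by
    field_simp
    ring
  rw [hval] at h
  replace h := h.congr_fun fun p : Nat.Primes =>
    one_sub_two_div_sq_add_one (Nat.cast_ne_zero.mpr p.prop.ne_zero)
  exact ⟨h.multipliable, h.tprod_eq⟩
end
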